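/- arXiv:1001.1394 — 4 statements merged into one kernel-verified Lean document; each statement's English description precedes it below -/
import Mathlib

section
/- Let U ⊆ ℂ be open, let φ : U → ℂ be holomorphic with φ′(z) ≠ 0 for all z ∈ U, and let u : ℝ² × ℝ → ℝ be a positive twice continuously differentiable function satisfying u_t = (ln u)_{xx} + (ln u)_{yy} everywhere on ℝ² × ℝ. Define ũ on U × ℝ by ũ(z, t) := u(Re φ(z), Im φ(z), t) · |φ′(z)|². Then ũ is positive and satisfies ũ_t = (ln ũ)_{xx} + (ln ũ)_{yy} at every point of U × ℝ, where x, y denote the real and imaginary parts of z. -/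
/-! Near each point of `U`, `log ũ = (log u) ∘ φ + 2 log ‖φ'‖`. The second summand is harmonic,
and for holomorphic `φ` the Laplacian transforms as `Δ (g ∘ φ) = ‖φ'‖² (Δ g) ∘ φ`: along the
coordinate lines `φ` moves with velocities `φ'` and `I φ'`, so the `φ''`-terms of the two second
derivatives cancel and the Hessian of `g` evaluated on `φ'` and on `I φ'` sums to `‖φ'‖²` times its
trace. Hence `Δ log ũ = ‖φ'‖² · (u_t ∘ φ) = ũ_t`. -/

open Complex Filter Topology InnerProductSpace Laplacian

section

variable {E F : Type*} [NormedAddCommGroup E] [NormedSpace ℝ E] [NormedAddCommGroup F]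
  [NormedSpace ℝ F]

theorem deriv_deriv_comp_of_contDiffAt {g : E → F} {c c' : ℝ → E} {c'' : E} {x : ℝ}
    (hg : ContDiffAt ℝ 2 g (c x)) (hc : ∀ᶠ s in 𝓝 x, HasDerivAt c (c' s) s)
    (hc' : HasDerivAt c' c'' x) :
    deriv (deriv (g ∘ c)) x =
      fderiv ℝ (fderiv ℝ g) (c x) (c' x) (c' x) + fderiv ℝ g (c x) c'' := by
  have hg_near : ∀ᶠ s in 𝓝 x, DifferentiableAt ℝ g (c s) :=
    hc.self_of_nhds.continuousAt.eventually
      ((hg.eventually (by simp)).mono fun w hw => hw.differentiableAt two_ne_zero)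
  have hderiv : deriv (g ∘ c) =ᶠ[𝓝 x] fun s => fderiv ℝ g (c s) (c' s) := by
    filter_upwards [hc, hg_near] with s hcs hgs
    exact (hgs.hasFDerivAt.comp_hasDerivAt s hcs).deriv
  have hDg : DifferentiableAt ℝ (fderiv ℝ g) (c x) :=
    (hg.fderiv_right (m := 1) le_rfl).differentiableAt one_ne_zero
  rw [hderiv.deriv_eq]
  exact ((hDg.hasFDerivAt.comp_hasDerivAt x hc.self_of_nhds).clm_apply hc').deriv

theorem hasDerivAt_mk_re (x y : ℝ) : HasDerivAt (fun s : ℝ => (⟨s, y⟩ : ℂ)) 1 x := by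
  have h : (fun s : ℝ => (⟨s, y⟩ : ℂ)) = fun s : ℝ => (s : ℂ) + y * I := by
    funext s; exact mk_eq_add_mul_I s y
  simpa [h] using (ofRealCLM.hasDerivAt (x := x)).add_const (y * I)

theorem hasDerivAt_mk_im (x y : ℝ) : HasDerivAt (fun s : ℝ => (⟨x, s⟩ : ℂ)) I y := by
  have h : (fun s : ℝ => (⟨x, s⟩ : ℂ)) = fun s : ℝ => x + s * I := by
    funext s; exact mk_eq_add_mul_I x s
  simpa [h] using ((ofRealCLM.hasDerivAt (x := y)).mul_const I).const_add (x : ℂ)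

theorem laplacian_eq_deriv_deriv_add_deriv_deriv {g : ℂ → F} {x y : ℝ}
    (hg : ContDiffAt ℝ 2 g ⟨x, y⟩) :
    Δ g ⟨x, y⟩ = deriv (deriv fun x' => g ⟨x', y⟩) x + deriv (deriv fun y' => g ⟨x, y'⟩) y := by
  have hre := deriv_deriv_comp_of_contDiffAt (c := fun s => ⟨s, y⟩) hg
    (.of_forall fun s => hasDerivAt_mk_re s y) (hasDerivAt_const x (1 : ℂ))
  have him := deriv_deriv_comp_of_contDiffAt (c := fun s => ⟨x, s⟩) hg
    (.of_forall fun s => hasDerivAt_mk_im x s) (hasDerivAt_const y I)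
  simp only [map_zero, add_zero, Function.comp_def] at hre him
  simp [laplacian_eq_iteratedFDeriv_complexPlane, iteratedFDeriv_two_apply, hre, him]

theorem ContinuousLinearMap.apply_self_add_apply_mul_I_self (H : ℂ →L[ℝ] ℂ →L[ℝ] F) (c : ℂ) :
    H c c + H (c * I) (c * I) = ‖c‖ ^ 2 • (H 1 1 + H I I) := by
  obtain ⟨a, b⟩ := c
  have hc : (⟨a, b⟩ : ℂ) = a • (1 : ℂ) + b • I := by simp [Complex.ext_iff]
  have hcI : (⟨a, b⟩ : ℂ) * I = (-b) • (1 : ℂ) + a • I := by simp [Complex.ext_iff]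
  rw [Complex.sq_norm, normSq_mk, hcI, hc]
  simp only [map_add, map_smul, add_apply, smul_apply]
  module

theorem HasDerivAt.comp_add_ofReal_mul {f : ℂ → ℂ} {f' z v : ℂ} {s : ℝ}
    (hf : HasDerivAt f f' (z + s * v)) : HasDerivAt (fun s : ℝ => f (z + s * v)) (f' * v) s := by
  simpa using (hf.comp (s : ℂ) (((hasDerivAt_id (s : ℂ)).mul_const v).const_add z)).comp_ofReal

theorem fderiv_fderiv_comp_apply_of_analyticAt {g : ℂ → F} {f : ℂ → ℂ} {z : ℂ}
    (hf : AnalyticAt ℂ f z) (hg : ContDiffAt ℝ 2 g (f z)) (v : ℂ) :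
    fderiv ℝ (fderiv ℝ (g ∘ f)) z v v =
      fderiv ℝ (fderiv ℝ g) (f z) (deriv f z * v) (deriv f z * v) +
        fderiv ℝ g (f z) (deriv (deriv f) z * v * v) := by
  have hgf : ContDiffAt ℝ 2 (g ∘ f) (z + (0 : ℝ) * v) := by
    simpa using hg.comp z (hf.contDiffAt.restrict_scalars ℝ)
  have hline : ∀ s : ℝ, HasDerivAt (fun s : ℝ => z + s * v) v s := fun s => by
    simpa using (hasDerivAt_id (z + s * v)).comp_add_ofReal_mul
  have hf_near : ∀ᶠ s : ℝ in 𝓝 0,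
      HasDerivAt (fun s : ℝ => f (z + s * v)) (deriv f (z + s * v) * v) s := by
    have : ∀ᶠ s : ℝ in 𝓝 0, AnalyticAt ℂ f (z + s * v) :=
      (hline 0).continuousAt.eventually (by simpa using hf.eventually_analyticAt)
    exact this.mono fun s hs => hs.differentiableAt.hasDerivAt.comp_add_ofReal_mul
  have hf'_at : HasDerivAt (deriv f) (deriv (deriv f) z) (z + (0 : ℝ) * v) := by
    simpa using hf.deriv.differentiableAt.hasDerivAt
  have along_line := deriv_deriv_comp_of_contDiffAt (c := fun s : ℝ => z + s * v) hgf
    (.of_forall hline) (hasDerivAt_const _ v)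
  have along_image := deriv_deriv_comp_of_contDiffAt (g := g) (c := fun s : ℝ => f (z + s * v))
    (by simpa using hg) hf_near (hf'_at.comp_add_ofReal_mul.mul_const v)
  simpa using along_line.symm.trans along_image

theorem laplacian_comp_of_analyticAt {g : ℂ → F} {f : ℂ → ℂ} {z : ℂ}
    (hf : AnalyticAt ℂ f z) (hg : ContDiffAt ℝ 2 g (f z)) :
    Δ (g ∘ f) z = ‖deriv f z‖ ^ 2 • Δ g (f z) := by
  have hII : deriv (deriv f) z * I * I = -deriv (deriv f) z := by
    rw [mul_assoc, I_mul_I, mul_neg_one]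
  simp only [laplacian_eq_iteratedFDeriv_complexPlane, iteratedFDeriv_two_apply,
    Matrix.cons_val_zero, Matrix.cons_val_one, fderiv_fderiv_comp_apply_of_analyticAt hf hg,
    mul_one, hII, map_neg]
  rw [← ContinuousLinearMap.apply_self_add_apply_mul_I_self]
  abel

theorem log_mul_norm_deriv_sq_eventuallyEq {p : ℂ → ℝ} {φ : ℂ → ℂ} {z : ℂ}
    (hφ : AnalyticAt ℂ φ z) (hφ' : deriv φ z ≠ 0) (hp : ContinuousAt p (φ z))
    (hpz : p (φ z) ≠ 0) :
    (fun w => Real.log (p (φ w) * ‖deriv φ w‖ ^ 2)) =ᶠ[𝓝 z]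
      (fun w => Real.log (p w)) ∘ φ + (2 : ℝ) • fun w => Real.log ‖deriv φ w‖ := by
  have hp_near : ∀ᶠ w in 𝓝 z, p (φ w) ≠ 0 :=
    (hp.comp hφ.continuousAt).eventually_ne hpz
  have hφ'_near : ∀ᶠ w in 𝓝 z, deriv φ w ≠ 0 := hφ.deriv.continuousAt.eventually_ne hφ'
  filter_upwards [hp_near, hφ'_near] with w hpw hφ'w
  rw [Real.log_mul hpw (by positivity), Real.log_pow]
  simp

theorem contDiffAt_log_mul_norm_deriv_sq {p : ℂ → ℝ} {φ : ℂ → ℂ} {z : ℂ}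
    (hφ : AnalyticAt ℂ φ z) (hφ' : deriv φ z ≠ 0) (hp : ContDiffAt ℝ 2 p (φ z))
    (hpz : p (φ z) ≠ 0) :
    ContDiffAt ℝ 2 (fun w => Real.log (p (φ w) * ‖deriv φ w‖ ^ 2)) z :=
  ((hp.comp z (hφ.contDiffAt.restrict_scalars ℝ)).mul
    ((contDiff_norm_sq ℝ).contDiffAt.comp z (hφ.deriv.contDiffAt.restrict_scalars ℝ))).log
    (mul_ne_zero hpz (pow_ne_zero 2 (norm_ne_zero_iff.2 hφ')))

theorem laplacian_log_mul_norm_deriv_sq {p : ℂ → ℝ} {φ : ℂ → ℂ} {z : ℂ}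
    (hφ : AnalyticAt ℂ φ z) (hφ' : deriv φ z ≠ 0) (hp : ContDiffAt ℝ 2 p (φ z))
    (hpz : p (φ z) ≠ 0) :
    Δ (fun w => Real.log (p (φ w) * ‖deriv φ w‖ ^ 2)) z =
      ‖deriv φ z‖ ^ 2 * Δ (fun w => Real.log (p w)) (φ z) := by
  have hlogp : ContDiffAt ℝ 2 (fun w => Real.log (p w)) (φ z) := hp.log hpz
  have harmonic := hφ.deriv.harmonicAt_log_norm hφ'
  rw [(laplacian_congr_nhds
      (log_mul_norm_deriv_sq_eventuallyEq hφ hφ' hp.continuousAt hpz)).eq_of_nhds,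
    (hlogp.comp z (hφ.contDiffAt.restrict_scalars ℝ)).laplacian_add
      (f₂ := (2 : ℝ) • fun w => Real.log ‖deriv φ w‖) (harmonic.1.const_smul (2 : ℝ)),
    laplacian_smul _ harmonic.1, harmonic.2.eq_of_nhds, laplacian_comp_of_analyticAt hφ hlogp]
  simp

end

/-- Conformal-change symmetry of the surface Ricci flow equation
`u_t = (ln u)_xx + (ln u)_yy`: if `φ` is holomorphic on an open `U ⊆ ℂ` with
nonvanishing derivative and `u` is a positive solution, then
`ũ(z,t) = u(Re φ(z), Im φ(z), t) · |φ'(z)|²` is a positive solution on `U × ℝ`. -/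
theorem ricci_flow_conformal_symmetry
    (U : Set ℂ) (hU : IsOpen U) (φ : ℂ → ℂ)
    (hφ : DifferentiableOn ℂ φ U)
    (hφ' : ∀ z ∈ U, deriv φ z ≠ 0)
    (u : ℝ → ℝ → ℝ → ℝ)
    (hu_pos : ∀ x y t : ℝ, 0 < u x y t)
    (hu_smooth : ContDiff ℝ 2 (fun p : ℝ × ℝ × ℝ => u p.1 p.2.1 p.2.2))
    (hu_pde : ∀ x y t : ℝ,
      deriv (fun t' => u x y t') t =
        deriv (deriv (fun x' => Real.log (u x' y t))) x +
        deriv (deriv (fun y' => Real.log (u x y' t))) y)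
    (v : ℝ → ℝ → ℝ → ℝ)
    (hv : v = fun x y t =>
      u (φ ⟨x, y⟩).re (φ ⟨x, y⟩).im t * ‖deriv φ ⟨x, y⟩‖ ^ 2) :
    ∀ x y t : ℝ, (⟨x, y⟩ : ℂ) ∈ U →
      0 < v x y t ∧
      deriv (fun t' => v x y t') t =
        deriv (deriv (fun x' => Real.log (v x' y t))) x +
        deriv (deriv (fun y' => Real.log (v x y' t))) y := by
  subst hv
  intro x y t hz
  have hφz : AnalyticAt ℂ φ ⟨x, y⟩ := hφ.analyticAt (hU.mem_nhds hz)
  set p : ℂ → ℝ := fun w => u w.re w.im t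
  have hp : ContDiff ℝ 2 p :=
    hu_smooth.comp (reCLM.contDiff.prodMk (imCLM.contDiff.prodMk contDiff_const))
  have hpz : p (φ ⟨x, y⟩) ≠ 0 := (hu_pos _ _ _).ne'
  have hu_t : DifferentiableAt ℝ (fun t' => u (φ ⟨x, y⟩).re (φ ⟨x, y⟩).im t') t :=
    (hu_smooth.comp (contDiff_const.prodMk (contDiff_const.prodMk contDiff_id))).differentiable
      two_ne_zero t
  have hpde : deriv (fun t' => u (φ ⟨x, y⟩).re (φ ⟨x, y⟩).im t') t =
      Δ (fun w => Real.log (p w)) (φ ⟨x, y⟩) := by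
    rw [laplacian_eq_deriv_deriv_add_deriv_deriv (hp.contDiffAt.log hpz), hu_pde]
  refine ⟨mul_pos (hu_pos _ _ _) (pow_pos (norm_pos_iff.2 (hφ' _ hz)) 2), ?_⟩
  rw [deriv_mul_const hu_t, hpde, ← laplacian_eq_deriv_deriv_add_deriv_deriv
    (contDiffAt_log_mul_norm_deriv_sq hφz (hφ' _ hz) hp.contDiffAt hpz),
    laplacian_log_mul_norm_deriv_sq hφz (hφ' _ hz) hp.contDiffAt hpz, mul_comm]
end

section
/- Let f : ℝ³ → ℝ be a twice continuously differentiable function satisfying e^{f}(∂²_t f + (∂_t f)²) = ∂²_x f + ∂²_y f at every point (x,y,t) ∈ ℝ³. Then for any fixed ε ∈ ℝ, the function w(x,y,t) := f(x, y, e^{−ε} t) + 2ε also satisfies e^{w}(∂²_t w + (∂_t w)²) = ∂²_x w + ∂²_y w at every point of ℝ³. -/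
/-! Rescaling time by `c` multiplies `∂²_t` and `(∂_t)²` by `c²`, and leaves the spatial
derivatives untouched; with `c = e^{-ε}` the extra factor `e^{2ε}` in `e^w` cancels `c²`. -/

section TimeRescaling

variable {𝕜 : Type*} [NontriviallyNormedField 𝕜]

theorem deriv_comp_const_mul (g : 𝕜 → 𝕜) (c : 𝕜) :
    deriv (fun s => g (c * s)) = fun s => c * deriv g (c * s) :=
  funext fun _ => deriv_comp_mul_left c g _

theorem deriv_deriv_comp_const_mul (g : 𝕜 → 𝕜) (c t : 𝕜) :
    deriv (deriv fun s => g (c * s)) t = c ^ 2 * deriv (deriv g) (c * t) := by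
  rw [deriv_comp_const_mul, deriv_const_mul_field, deriv_comp_mul_left, smul_eq_mul]
  ring

end TimeRescaling

theorem exp_add_two_mul_mul_exp_neg_sq (a ε : ℝ) :
    Real.exp (a + 2 * ε) * Real.exp (-ε) ^ 2 = Real.exp a := by
  rw [← Real.exp_nat_mul, ← Real.exp_add]
  congr 1
  push_cast
  ring

theorem hyperbolic_flow_scaling_symmetry_general
    (f : ℝ → ℝ → ℝ → ℝ)
    (hpde : ∀ x y t : ℝ,
      Real.exp (f x y t) *
          (deriv (deriv (fun t' => f x y t')) t + (deriv (fun t' => f x y t') t) ^ 2) =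
        deriv (deriv (fun x' => f x' y t)) x +
        deriv (deriv (fun y' => f x y' t)) y)
    (ε : ℝ) :
    ∀ x y t : ℝ,
      Real.exp (f x y (Real.exp (-ε) * t) + 2 * ε) *
          (deriv (deriv (fun t' => f x y (Real.exp (-ε) * t') + 2 * ε)) t +
            (deriv (fun t' => f x y (Real.exp (-ε) * t') + 2 * ε) t) ^ 2) =
        deriv (deriv (fun x' => f x' y (Real.exp (-ε) * t) + 2 * ε)) x +
        deriv (deriv (fun y' => f x y' (Real.exp (-ε) * t) + 2 * ε)) y := by
  intro x y t
  simp only [deriv_add_const']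
  rw [deriv_deriv_comp_const_mul, deriv_comp_const_mul, ← hpde x y (Real.exp (-ε) * t),
    ← exp_add_two_mul_mul_exp_neg_sq (f x y (Real.exp (-ε) * t)) ε]
  ring

/-- Time-scaling symmetry `w(x,y,t) = f(x, y, e^{-ε} t) + 2ε` of the surface
hyperbolic geometric flow equation `e^w (w_tt + w_t²) = w_xx + w_yy`. -/
theorem hyperbolic_flow_scaling_symmetry
    (f : ℝ → ℝ → ℝ → ℝ)
    (hf : ContDiff ℝ 2 (fun p : ℝ × ℝ × ℝ => f p.1 p.2.1 p.2.2))
    (hpde : ∀ x y t : ℝ,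
      Real.exp (f x y t) *
          (deriv (deriv (fun t' => f x y t')) t + (deriv (fun t' => f x y t') t) ^ 2) =
        deriv (deriv (fun x' => f x' y t)) x +
        deriv (deriv (fun y' => f x y' t)) y)
    (ε : ℝ) :
    ∀ x y t : ℝ,
      Real.exp (f x y (Real.exp (-ε) * t) + 2 * ε) *
          (deriv (deriv (fun t' => f x y (Real.exp (-ε) * t') + 2 * ε)) t +
            (deriv (fun t' => f x y (Real.exp (-ε) * t') + 2 * ε) t) ^ 2) =
        deriv (deriv (fun x' => f x' y (Real.exp (-ε) * t) + 2 * ε)) x +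
        deriv (deriv (fun y' => f x y' (Real.exp (-ε) * t) + 2 * ε)) y :=
  hyperbolic_flow_scaling_symmetry_general f hpde ε
end

section
/- Let f : ℝ³ → ℝ be a twice continuously differentiable function satisfying e^{f}(∂²_t f + (∂_t f)²) = ∂²_x f + ∂²_y f at every point (x,y,t) ∈ ℝ³. Then for any fixed ε ∈ ℝ, the function w(x,y,t) := f(x − ε y, y + ε x, √(1 + ε²) · t) also satisfies e^{w}(∂²_t w + (∂_t w)²) = ∂²_x w + ∂²_y w at every point of ℝ³. -/
/-!
Write `w = f ∘ A` with `A (x, y, t) = (x - εy, y + εx, ct)`, `c = √(1 + ε²)`. Along coordinate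
lines the second derivatives of `w` are those of `f` at `A p` in the directions `A eᵢ`. In the
plane `A` is a rotation-dilation, so the spatial Laplacian of `w` is `(1 + ε²)` times that of `f`
(the mixed terms cancel, so no symmetry of the Hessian is needed), and the time terms
`w_tt + w_t²` pick up the same factor `c² = 1 + ε²`.
-/

section Chain

variable {E E' F : Type*} [NormedAddCommGroup E] [NormedSpace ℝ E]
  [NormedAddCommGroup E'] [NormedSpace ℝ E'] [NormedAddCommGroup F] [NormedSpace ℝ F] {G : E → F}

theorem deriv_comp_of_hasDerivAt {γ : ℝ → E} {v : E} (hG : Differentiable ℝ G)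
    (hγ : ∀ s, HasDerivAt γ v s) :
    deriv (fun s => G (γ s)) = fun s => fderiv ℝ G (γ s) v :=
  funext fun s => ((hG (γ s)).hasFDerivAt.comp_hasDerivAt s (hγ s)).deriv

theorem deriv_deriv_comp_of_hasDerivAt {γ : ℝ → E} {v : E} (hG : ContDiff ℝ 2 G)
    (hγ : ∀ s, HasDerivAt γ v s) (s : ℝ) :
    deriv (deriv fun s => G (γ s)) s = fderiv ℝ (fderiv ℝ G) (γ s) v v := by
  have hG' : Differentiable ℝ (fderiv ℝ G) :=
    (hG.fderiv_right (m := 1) (by norm_num)).differentiable (by norm_num)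
  rw [deriv_comp_of_hasDerivAt (hG.differentiable (by norm_num)) hγ]
  exact (((hG' (γ s)).hasFDerivAt.comp_hasDerivAt s (hγ s)).clm_apply
    (hasDerivAt_const s v)).deriv.trans (by simp)

theorem fderiv_comp_continuousLinearMap (hG : Differentiable ℝ G) (A : E' →L[ℝ] E) (p u : E') :
    fderiv ℝ (G ∘ A) p u = fderiv ℝ G (A p) (A u) := by
  rw [fderiv_comp p (hG (A p)) A.differentiableAt, A.fderiv]
  rfl

theorem fderiv_fderiv_comp_continuousLinearMap (hG : ContDiff ℝ 2 G) (A : E' →L[ℝ] E)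
    (p u v : E') :
    fderiv ℝ (fderiv ℝ (G ∘ A)) p u v = fderiv ℝ (fderiv ℝ G) (A p) (A u) (A v) := by
  have h := congrArg (fun M => M ![u, v]) (A.iteratedFDeriv_comp_right hG p le_rfl)
  simpa [iteratedFDeriv_two_apply] using h

end Chain

def uncurry₃ {α β γ δ : Type*} (g : α → β → γ → δ) (p : α × β × γ) : δ := g p.1 p.2.1 p.2.2

section Uncurry₃

variable {F : Type*} [NormedAddCommGroup F] [NormedSpace ℝ F] {g : ℝ → ℝ → ℝ → F}

theorem deriv_thd_eq_uncurry₃ (hg : Differentiable ℝ (uncurry₃ g)) (x y t : ℝ) :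
    deriv (fun t' => g x y t') t = fderiv ℝ (uncurry₃ g) (x, y, t) (0, 0, 1) :=
  congrFun (deriv_comp_of_hasDerivAt hg fun s =>
    (hasDerivAt_const s x).prodMk ((hasDerivAt_const s y).prodMk (hasDerivAt_id s))) t

theorem deriv_deriv_fst_eq_uncurry₃ (hg : ContDiff ℝ 2 (uncurry₃ g)) (x y t : ℝ) :
    deriv (deriv fun x' => g x' y t) x =
      fderiv ℝ (fderiv ℝ (uncurry₃ g)) (x, y, t) (1, 0, 0) (1, 0, 0) :=
  deriv_deriv_comp_of_hasDerivAt hg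
    (fun s => (hasDerivAt_id s).prodMk (hasDerivAt_const s (y, t))) x

theorem deriv_deriv_snd_eq_uncurry₃ (hg : ContDiff ℝ 2 (uncurry₃ g)) (x y t : ℝ) :
    deriv (deriv fun y' => g x y' t) y =
      fderiv ℝ (fderiv ℝ (uncurry₃ g)) (x, y, t) (0, 1, 0) (0, 1, 0) :=
  deriv_deriv_comp_of_hasDerivAt hg (fun s =>
    (hasDerivAt_const s x).prodMk ((hasDerivAt_id s).prodMk (hasDerivAt_const s t))) y

theorem deriv_deriv_thd_eq_uncurry₃ (hg : ContDiff ℝ 2 (uncurry₃ g)) (x y t : ℝ) :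
    deriv (deriv fun t' => g x y t') t =
      fderiv ℝ (fderiv ℝ (uncurry₃ g)) (x, y, t) (0, 0, 1) (0, 0, 1) :=
  deriv_deriv_comp_of_hasDerivAt hg (fun s =>
    (hasDerivAt_const s x).prodMk ((hasDerivAt_const s y).prodMk (hasDerivAt_id s))) t

end Uncurry₃

def HypFlowEqAt (g : ℝ → ℝ → ℝ → ℝ) (x y t : ℝ) : Prop :=
  Real.exp (g x y t) * (deriv (deriv fun t' => g x y t') t + deriv (fun t' => g x y t') t ^ 2) =
    deriv (deriv fun x' => g x' y t) x + deriv (deriv fun y' => g x y' t) y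

theorem hypFlowEqAt_iff {g : ℝ → ℝ → ℝ → ℝ} (hg : ContDiff ℝ 2 (uncurry₃ g)) (x y t : ℝ) :
    HypFlowEqAt g x y t ↔
      Real.exp (uncurry₃ g (x, y, t)) *
          (fderiv ℝ (fderiv ℝ (uncurry₃ g)) (x, y, t) (0, 0, 1) (0, 0, 1) +
            fderiv ℝ (uncurry₃ g) (x, y, t) (0, 0, 1) ^ 2) =
        fderiv ℝ (fderiv ℝ (uncurry₃ g)) (x, y, t) (1, 0, 0) (1, 0, 0) +
          fderiv ℝ (fderiv ℝ (uncurry₃ g)) (x, y, t) (0, 1, 0) (0, 1, 0) := by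
  rw [HypFlowEqAt, deriv_deriv_fst_eq_uncurry₃ hg, deriv_deriv_snd_eq_uncurry₃ hg,
    deriv_deriv_thd_eq_uncurry₃ hg, deriv_thd_eq_uncurry₃ (hg.differentiable (by norm_num))]
  rfl

noncomputable def rotationScaling (ε : ℝ) : ℝ × ℝ × ℝ →L[ℝ] ℝ × ℝ × ℝ where
  toFun p := (p.1 - ε * p.2.1, p.2.1 + ε * p.1, √(1 + ε ^ 2) * p.2.2)
  map_add' p q := by ext <;> simp only [Prod.fst_add, Prod.snd_add] <;> ring
  map_smul' a p := by
    ext <;> simp only [Prod.smul_fst, Prod.smul_snd, smul_eq_mul, RingHom.id_apply] <;> ring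
  cont := by fun_prop

@[simp]
theorem rotationScaling_apply (ε x y t : ℝ) :
    rotationScaling ε (x, y, t) = (x - ε * y, y + ε * x, √(1 + ε ^ 2) * t) := rfl

theorem uncurry₃_comp_rotationScaling (f : ℝ → ℝ → ℝ → ℝ) (ε : ℝ) :
    uncurry₃ (fun x y t => f (x - ε * y) (y + ε * x) (√(1 + ε ^ 2) * t)) =
      uncurry₃ f ∘ rotationScaling ε := rfl

theorem apply_rotated_add_apply_rotated {F : Type*} [NormedAddCommGroup F] [NormedSpace ℝ F]
    (B : ℝ × ℝ × ℝ →L[ℝ] ℝ × ℝ × ℝ →L[ℝ] F) (ε : ℝ) :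
    B (1, ε, 0) (1, ε, 0) + B (-ε, 1, 0) (-ε, 1, 0) =
      (1 + ε ^ 2) • (B (1, 0, 0) (1, 0, 0) + B (0, 1, 0) (0, 1, 0)) := by
  have h₁ : ((1, ε, 0) : ℝ × ℝ × ℝ) = (1, 0, 0) + ε • (0, 1, 0) := by simp
  have h₂ : ((-ε, 1, 0) : ℝ × ℝ × ℝ) = (-ε) • (1, 0, 0) + (0, 1, 0) := by simp
  rw [h₁, h₂]
  simp only [map_add, map_smul, add_apply, smul_apply]
  module

/-- Rotation-plus-time-rescaling symmetry
`w(x,y,t) = f(x - εy, y + εx, √(1 + ε²) t)` of the surface hyperbolic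
geometric flow equation `e^w (w_tt + w_t²) = w_xx + w_yy`. -/
theorem hyperbolic_flow_rotation_symmetry
    (f : ℝ → ℝ → ℝ → ℝ)
    (hf : ContDiff ℝ 2 (fun p : ℝ × ℝ × ℝ => f p.1 p.2.1 p.2.2))
    (hpde : ∀ x y t : ℝ,
      Real.exp (f x y t) *
          (deriv (deriv (fun t' => f x y t')) t + (deriv (fun t' => f x y t') t) ^ 2) =
        deriv (deriv (fun x' => f x' y t)) x +
        deriv (deriv (fun y' => f x y' t)) y)
    (ε : ℝ) :
    ∀ x y t : ℝ,
      Real.exp (f (x - ε * y) (y + ε * x) (Real.sqrt (1 + ε ^ 2) * t)) *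
          (deriv (deriv (fun t' => f (x - ε * y) (y + ε * x) (Real.sqrt (1 + ε ^ 2) * t'))) t +
            (deriv (fun t' => f (x - ε * y) (y + ε * x) (Real.sqrt (1 + ε ^ 2) * t')) t) ^ 2) =
        deriv (deriv (fun x' =>
          f (x' - ε * y) (y + ε * x') (Real.sqrt (1 + ε ^ 2) * t))) x +
        deriv (deriv (fun y' =>
          f (x - ε * y') (y' + ε * x) (Real.sqrt (1 + ε ^ 2) * t))) y := by
  intro x y t
  have hf : ContDiff ℝ 2 (uncurry₃ f) := hf
  have hw := uncurry₃_comp_rotationScaling f ε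
  have h : HypFlowEqAt f (x - ε * y) (y + ε * x) (√(1 + ε ^ 2) * t) := hpde _ _ _
  show HypFlowEqAt (fun x y t => f (x - ε * y) (y + ε * x) (√(1 + ε ^ 2) * t)) x y t
  rw [hypFlowEqAt_iff hf] at h
  rw [hypFlowEqAt_iff (hw ▸ hf.comp (rotationScaling ε).contDiff), hw,
    fderiv_fderiv_comp_continuousLinearMap hf, fderiv_fderiv_comp_continuousLinearMap hf,
    fderiv_fderiv_comp_continuousLinearMap hf,
    fderiv_comp_continuousLinearMap (hf.differentiable (by norm_num))]
  set c := √(1 + ε ^ 2)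
  have hc : c ^ 2 = 1 + ε ^ 2 := Real.sq_sqrt (by positivity)
  have htime : rotationScaling ε (0, 0, 1) = c • (0, 0, 1) := by simp [c]
  have hx : rotationScaling ε (1, 0, 0) = (1, ε, 0) := by simp
  have hy : rotationScaling ε (0, 1, 0) = (-ε, 1, 0) := by simp
  rw [htime, hx, hy, apply_rotated_add_apply_rotated]
  simp only [map_smul, smul_apply, smul_eq_mul, Function.comp_apply,
    rotationScaling_apply] at h ⊢
  set B := fderiv ℝ (fderiv ℝ (uncurry₃ f)) (x - ε * y, y + ε * x, c * t)
  linear_combination c ^ 2 * h + (B (1, 0, 0) (1, 0, 0) + B (0, 1, 0) (0, 1, 0)) * hc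
end

section
/- Let ω : (0,∞) → ℝ be a positive twice continuously differentiable function and define u : ℝ × (0,∞) → ℝ by u(y, t) := t² ω(e^{y}/t). Then u satisfies u_{tt} = (ln u)_{yy} at every point of ℝ × (0,∞) if and only if ω satisfies, at every z > 0, the reduced ordinary differential equation z²(ω² − ω) ω″ − z(2ω² + ω) ω′ + z² (ω′)² + 2 ω³ = 0. In particular, for such ω the x-independent function u(x, y, t) = t² ω(e^{y}/t) solves the surface hyperbolic geometric flow equation u_{tt} = (ln u)_{xx} + (ln u)_{yy} on ℝ² × (0,∞). -/
/-! With `z = e^y / t`, the chain rule gives `∂²ₜ (t² ω(z)) = 2ω − 2zω′ + z²ω″` and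
`∂²ᵧ ln (t² ω(z)) = (zω′ω + z²ω″ω − z²ω′²) / ω²`; clearing the denominator `ω²` turns
their equality into the reduced ODE at `z`. Every `z > 0` arises this way (take `t = 1`,
`y = ln z`), and the `x`-derivatives of an `x`-independent function vanish. -/

open Real Filter Topology

/-- The reduced ODE (4.6) for the profile `ω` at the point `z`. -/
def ReducedODE (ω : ℝ → ℝ) (z : ℝ) : Prop :=
  z ^ 2 * (ω z ^ 2 - ω z) * deriv (deriv ω) z - z * (2 * ω z ^ 2 + ω z) * deriv ω z +
    z ^ 2 * (deriv ω z) ^ 2 + 2 * ω z ^ 3 = 0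

theorem sq_mul_eq_log_deriv_iff_reducedODE {w w₁ w₂ z : ℝ} (hw : w ≠ 0) :
    2 * w - 2 * z * w₁ + z ^ 2 * w₂ =
        (z * w₁ * w + z ^ 2 * w₂ * w - z ^ 2 * w₁ ^ 2) / w ^ 2 ↔
      z ^ 2 * (w ^ 2 - w) * w₂ - z * (2 * w ^ 2 + w) * w₁ + z ^ 2 * w₁ ^ 2 +
        2 * w ^ 3 = 0 := by
  rw [eq_div_iff (pow_ne_zero 2 hw)]
  constructor <;> intro h <;> linear_combination h

section ChainRule

variable {ω : ℝ → ℝ}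

theorem hasDerivAt_const_div {c s : ℝ} (hs : s ≠ 0) :
    HasDerivAt (fun t => c / t) (-c / s ^ 2) s :=
  ((hasDerivAt_const s c).div (hasDerivAt_id s) hs).congr_deriv (by simp)

theorem hasDerivAt_sq_mul_comp_div {c s : ℝ} (hs : s ≠ 0)
    (hω : DifferentiableAt ℝ ω (c / s)) :
    HasDerivAt (fun t => t ^ 2 * ω (c / t)) (2 * s * ω (c / s) - c * deriv ω (c / s)) s := by
  refine ((hasDerivAt_pow 2 s).mul
    (hω.hasDerivAt.comp s (hasDerivAt_const_div hs))).congr_deriv ?_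
  simp only [Function.comp_apply]
  field_simp
  ring

theorem deriv_deriv_sq_mul_comp_div {c t : ℝ} (ht : t ≠ 0)
    (hω : ∀ᶠ z in 𝓝 (c / t), DifferentiableAt ℝ ω z)
    (hω' : DifferentiableAt ℝ (deriv ω) (c / t)) :
    deriv (deriv fun s => s ^ 2 * ω (c / s)) t =
      2 * ω (c / t) - 2 * (c / t) * deriv ω (c / t) + (c / t) ^ 2 * deriv (deriv ω) (c / t) := by
  have hdiv : ContinuousAt (fun s => c / s) t := continuousAt_const.div continuousAt_id ht
  have hfirst : deriv (fun s => s ^ 2 * ω (c / s)) =ᶠ[𝓝 t]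
      fun s => 2 * s * ω (c / s) - c * deriv ω (c / s) := by
    filter_upwards [hdiv.eventually hω, eventually_ne_nhds ht] with s hωs hs
    exact (hasDerivAt_sq_mul_comp_div hs hωs).deriv
  have hsecond : HasDerivAt (fun s => 2 * s * ω (c / s) - c * deriv ω (c / s)) _ t :=
    (((hasDerivAt_id t).const_mul 2).mul
      (hω.self_of_nhds.hasDerivAt.comp t (hasDerivAt_const_div ht))).sub
      ((hω'.hasDerivAt.comp t (hasDerivAt_const_div ht)).const_mul c)
  rw [hfirst.deriv_eq, hsecond.deriv]
  simp only [Function.comp_apply, id]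
  field_simp
  ring

theorem hasDerivAt_log_mul_comp_exp_div {a t y : ℝ} (ha : a ≠ 0)
    (hω : DifferentiableAt ℝ ω (exp y / t)) (hω0 : ω (exp y / t) ≠ 0) :
    HasDerivAt (fun y => log (a * ω (exp y / t)))
      (exp y / t * deriv ω (exp y / t) / ω (exp y / t)) y := by
  refine (((hω.hasDerivAt.comp y ((hasDerivAt_exp y).div_const t)).const_mul a).log
    (mul_ne_zero ha hω0)).congr_deriv ?_
  simp only [Function.comp_apply]
  field_simp

theorem deriv_deriv_log_mul_comp_exp_div {a t y : ℝ} (ha : a ≠ 0)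
    (hω : ∀ᶠ z in 𝓝 (exp y / t), DifferentiableAt ℝ ω z)
    (hω' : DifferentiableAt ℝ (deriv ω) (exp y / t)) (hω0 : ω (exp y / t) ≠ 0) :
    deriv (deriv fun y => log (a * ω (exp y / t))) y =
      (exp y / t * deriv ω (exp y / t) * ω (exp y / t)
        + (exp y / t) ^ 2 * deriv (deriv ω) (exp y / t) * ω (exp y / t)
        - (exp y / t) ^ 2 * deriv ω (exp y / t) ^ 2) / ω (exp y / t) ^ 2 := by
  have hexp : ∀ s, HasDerivAt (fun y => exp y / t) (exp s / t) s :=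
    fun s => (hasDerivAt_exp s).div_const t
  have hcont : ContinuousAt (fun y => exp y / t) y := (hexp y).continuousAt
  have hfirst : deriv (fun y => log (a * ω (exp y / t))) =ᶠ[𝓝 y]
      fun s => exp s / t * deriv ω (exp s / t) / ω (exp s / t) := by
    filter_upwards [hcont.eventually hω,
      (hω.self_of_nhds.continuousAt.comp (f := fun y => exp y / t) hcont).eventually_ne hω0]
      with s hωs hω0s
    exact (hasDerivAt_log_mul_comp_exp_div ha hωs hω0s).deriv
  have hsecond := ((hexp y).mul (hω'.hasDerivAt.comp y (hexp y))).div
    (hω.self_of_nhds.hasDerivAt.comp y (hexp y)) hω0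
  rw [hfirst.deriv_eq]
  exact hsecond.deriv.trans (by simp only [Function.comp_apply, Pi.mul_apply]; ring)

theorem pde_iff_reducedODE {t y : ℝ} (ht : t ≠ 0)
    (hω : ∀ᶠ z in 𝓝 (exp y / t), DifferentiableAt ℝ ω z)
    (hω' : DifferentiableAt ℝ (deriv ω) (exp y / t)) (hω0 : ω (exp y / t) ≠ 0) :
    deriv (deriv fun s => s ^ 2 * ω (exp y / s)) t =
        deriv (deriv fun y => log (t ^ 2 * ω (exp y / t))) y ↔
      ReducedODE ω (exp y / t) := by
  rw [deriv_deriv_sq_mul_comp_div ht hω hω', deriv_deriv_log_mul_comp_exp_div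
    (pow_ne_zero 2 ht) hω hω' hω0]
  exact sq_mul_eq_log_deriv_iff_reducedODE hω0

end ChainRule

/-- Group-invariant solutions of the surface hyperbolic geometric flow:
`u(y,t) = t² ω(e^y / t)` solves `u_tt = (ln u)_yy` on `ℝ × (0,∞)` iff the
profile `ω` satisfies the reduced ODE
`z²(ω² − ω)ω″ − z(2ω² + ω)ω′ + z²(ω′)² + 2ω³ = 0` on `(0,∞)`; in particular,
for such `ω` the `x`-independent function `u(x,y,t) = t² ω(e^y / t)` solves the
full equation `u_tt = (ln u)_xx + (ln u)_yy` on `ℝ² × (0,∞)`. -/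
theorem hyperbolic_flow_invariant_reduction
    (ω : ℝ → ℝ)
    (hω_pos : ∀ z : ℝ, 0 < z → 0 < ω z)
    (hω_smooth : ContDiffOn ℝ 2 ω (Set.Ioi (0 : ℝ))) :
    ((∀ y t : ℝ, 0 < t →
      deriv (deriv (fun t' => t' ^ 2 * ω (Real.exp y / t'))) t =
        deriv (deriv (fun y' => Real.log (t ^ 2 * ω (Real.exp y' / t)))) y)
    ↔
    (∀ z : ℝ, 0 < z →
      z ^ 2 * (ω z ^ 2 - ω z) * deriv (deriv ω) z -
        z * (2 * ω z ^ 2 + ω z) * deriv ω z +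
        z ^ 2 * (deriv ω z) ^ 2 + 2 * ω z ^ 3 = 0))
    ∧
    ((∀ z : ℝ, 0 < z →
      z ^ 2 * (ω z ^ 2 - ω z) * deriv (deriv ω) z -
        z * (2 * ω z ^ 2 + ω z) * deriv ω z +
        z ^ 2 * (deriv ω z) ^ 2 + 2 * ω z ^ 3 = 0) →
      ∀ x y t : ℝ, 0 < t →
        deriv (deriv (fun t' => t' ^ 2 * ω (Real.exp y / t'))) t =
          deriv (deriv (fun _x' : ℝ => Real.log (t ^ 2 * ω (Real.exp y / t)))) x +
          deriv (deriv (fun y' => Real.log (t ^ 2 * ω (Real.exp y' / t)))) y) := by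
  have hω : ∀ z, 0 < z → ∀ᶠ w in 𝓝 z, DifferentiableAt ℝ ω w := fun z hz =>
    (eventually_gt_nhds hz).mono fun w hw =>
      (hω_smooth.contDiffAt (Ioi_mem_nhds hw)).differentiableAt (by norm_num)
  have hω' : ∀ z, 0 < z → DifferentiableAt ℝ (deriv ω) z := fun z hz =>
    ((hω_smooth.deriv_of_isOpen isOpen_Ioi (m := 1) (by norm_num)).contDiffAt
      (Ioi_mem_nhds hz)).differentiableAt (by norm_num)
  have key : ∀ y t : ℝ, 0 < t →
      (deriv (deriv fun s => s ^ 2 * ω (exp y / s)) t =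
        deriv (deriv fun y => log (t ^ 2 * ω (exp y / t))) y ↔ ReducedODE ω (exp y / t)) :=
    fun y t ht =>
      have hz := div_pos (exp_pos y) ht
      pde_iff_reducedODE ht.ne' (hω _ hz) (hω' _ hz) (hω_pos _ hz).ne'
  have hpde_of_ode (hode : ∀ z, 0 < z → ReducedODE ω z) (y t : ℝ) (ht : 0 < t) :=
    (key y t ht).2 (hode _ (div_pos (exp_pos y) ht))
  refine ⟨⟨fun hpde z hz => ?_, hpde_of_ode⟩, fun hode x y t ht => ?_⟩
  · simpa [ReducedODE, exp_log hz] using (key (log z) 1 one_pos).1 (hpde _ _ one_pos)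
  · rw [deriv_const', deriv_const, zero_add]
    exact hpde_of_ode hode y t ht
end
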